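/- Let Φ be a Young function satisfying the Δ₂ condition and u ∈ L^Φ(ℝ^N). Then liminf_{t→0⁺} Φ(t)·|E_t|_{2N} ≥ 2ω_N ∫_{ℝ^N} Φ(|u(x)|) dx, where E_t = {(x,y) : x ≠ y, Φ(|u(x)-u(y)|) ≥ Φ(t)|x-y|^N}. -/

import Mathlib

/-!
Fix `δ ∈ (0, 1)` and let `G_t` be the set of pairs `(x, y)`, `x ≠ y`, with `|u y| < δ |u x|`
and `Φ(t) |x - y|^N ≤ Φ((1 - δ) |u x|)`. Since then `|u x - u y| > (1 - δ) |u x|`, both `G_t`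
and its mirror image lie in `E_t`, and they are disjoint, so `2 |G_t| ≤ |E_t|`. For `u x ≠ 0`
the slice of `G_t` at `x` contains the ball of radius `(Φ((1 - δ) |u x|) / Φ(t))^(1/N)` around
`x` minus the set `{|u| ≥ δ |u x|}`, which has finite measure by Markov's inequality. Hence
`Φ(t)` times the measure of the slice is at least `ω_N Φ((1 - δ) |u x|) - o(1)` as `t → 0⁺`,
and Fatou's lemma, first in `x` and then in `δ → 0`, gives the bound. This needs `Φ > 0` on
`(0, ∞)`; otherwise the doubling condition forces `Φ = 0` on `[0, ∞)` and the left-hand side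
vanishes.
-/

open MeasureTheory Metric Set Filter Topology Module
open scoped ENNReal

section YoungFunction

variable {Φ : ℝ → ℝ}

lemma monotoneOn_of_convexOn_of_map_zero (hconv : ConvexOn ℝ (Ici 0) Φ) (h0 : Φ 0 = 0)
    (hnn : ∀ s, 0 ≤ s → 0 ≤ Φ s) : MonotoneOn Φ (Ici 0) := by
  intro a (ha : 0 ≤ a) b (hb : 0 ≤ b) hab
  rcases ha.eq_or_lt with rfl | ha
  · simpa only [h0] using hnn b hb
  rcases hab.eq_or_lt with rfl | hab
  · rfl
  refine hconv.le_right_of_left_le self_mem_Ici hb ?_ (by simpa only [h0] using hnn a ha.le)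
  rw [openSegment_eq_Ioo (ha.trans hab)]
  exact ⟨ha, hab⟩

lemma eq_zero_of_doubling {k : ℝ} (hΔ : ∀ s > (0:ℝ), Φ (2 * s) ≤ k * Φ s)
    (hmono : MonotoneOn Φ (Ici 0)) (hnn : ∀ s, 0 ≤ s → 0 ≤ Φ s) {s r : ℝ} (hs : 0 < s)
    (hΦs : Φ s = 0) (hr : 0 ≤ r) : Φ r = 0 := by
  have hpow (n : ℕ) : Φ (2 ^ n * s) = 0 := by
    induction n with
    | zero => simpa using hΦs
    | succ n ih =>
      refine le_antisymm ?_ (hnn _ (by positivity))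
      calc Φ (2 ^ (n + 1) * s) = Φ (2 * (2 ^ n * s)) := by ring_nf
        _ ≤ k * Φ (2 ^ n * s) := hΔ _ (by positivity)
        _ = 0 := by rw [ih, mul_zero]
  obtain ⟨n, hn⟩ := pow_unbounded_of_one_lt (r / s) one_lt_two
  refine le_antisymm ?_ (hnn r hr)
  calc Φ r ≤ Φ (2 ^ n * s) := hmono hr (mem_Ici.2 (by positivity)) ((div_le_iff₀ hs).1 hn.le)
    _ = 0 := hpow n

lemma tendsto_nhdsGT_zero_of_pos (hΦ : ContinuousOn Φ (Ici 0)) (h0 : Φ 0 = 0)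
    (hpos : ∀ s > 0, 0 < Φ s) : Tendsto Φ (𝓝[>] 0) (𝓝[>] 0) :=
  tendsto_nhdsWithin_iff.2
    ⟨by simpa only [h0] using ((hΦ 0 self_mem_Ici).mono Ioi_subset_Ici_self).tendsto,
      eventually_mem_nhdsWithin.mono hpos⟩

variable {α : Type*} [MeasurableSpace α] {u : α → ℝ}

lemma ContinuousOn.measurable_comp_mul_abs (hΦ : ContinuousOn Φ (Ici 0)) {c : ℝ} (hc : 0 ≤ c)
    (hu : Measurable u) : Measurable fun x => Φ (c * |u x|) :=
  (hΦ.comp_continuous (continuous_const.mul continuous_abs)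
    fun s => mul_nonneg hc (abs_nonneg s)).measurable.comp hu

lemma measure_le_abs_ne_top (μ : Measure α) (hΦ : ContinuousOn Φ (Ici 0))
    (hmono : MonotoneOn Φ (Ici 0)) (hu : Measurable u)
    (hfin : ∫⁻ x, ENNReal.ofReal (Φ |u x|) ∂μ ≠ ∞) {s : ℝ} (hs : 0 ≤ s) (hΦs : 0 < Φ s) :
    μ {x | s ≤ |u x|} ≠ ∞ := by
  have hΦu : Measurable fun x => ENNReal.ofReal (Φ |u x|) := by
    simpa using (hΦ.measurable_comp_mul_abs zero_le_one hu).ennreal_ofReal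
  have hΦs' : ENNReal.ofReal (Φ s) ≠ 0 := (ENNReal.ofReal_pos.2 hΦs).ne'
  refine ne_top_of_le_ne_top (ENNReal.div_ne_top hfin hΦs') ((measure_mono ?_).trans
    (meas_ge_le_lintegral_div hΦu.aemeasurable hΦs' ENNReal.ofReal_ne_top))
  exact fun x (hx : s ≤ |u x|) => ENNReal.ofReal_le_ofReal (hmono hs (abs_nonneg (u x)) hx)

end YoungFunction

section PairSets

variable {X : Type*} [MetricSpace X]

/-- The set `E_t` of the statement, with the dimension as the parameter `n`. -/
def jumpSet (Φ : ℝ → ℝ) (u : X → ℝ) (n : ℕ) (t : ℝ) : Set (X × X) :=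
  {p | p.1 ≠ p.2 ∧ Φ t * dist p.1 p.2 ^ n ≤ Φ (|u p.1 - u p.2|)}

/-- The set `G_t` of the sketch above. -/
def dropSet (Φ : ℝ → ℝ) (u : X → ℝ) (n : ℕ) (δ t : ℝ) : Set (X × X) :=
  {p | p.1 ≠ p.2 ∧ |u p.2| < δ * |u p.1| ∧ Φ t * dist p.1 p.2 ^ n ≤ Φ ((1 - δ) * |u p.1|)}

variable {Φ : ℝ → ℝ} {u : X → ℝ} {n : ℕ} {δ t : ℝ}

lemma swap_preimage_jumpSet : Prod.swap ⁻¹' jumpSet Φ u n t = jumpSet Φ u n t := by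
  ext p
  simp only [jumpSet, mem_preimage, Prod.fst_swap, Prod.snd_swap, mem_ofPred_eq, ne_comm,
    dist_comm p.2, abs_sub_comm (u p.2)]

lemma dropSet_subset_jumpSet (hmono : MonotoneOn Φ (Ici 0)) (hδ : δ ≤ 1) :
    dropSet Φ u n δ t ⊆ jumpSet Φ u n t := by
  rintro p ⟨hne, hdrop, hdist⟩
  have := abs_sub_abs_le_abs_sub (u p.1) (u p.2)
  exact ⟨hne, hdist.trans (hmono (mul_nonneg (sub_nonneg.2 hδ) (abs_nonneg _))
    (abs_nonneg (u p.1 - u p.2)) (by linarith))⟩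

lemma disjoint_dropSet_swap (hδ : δ ≤ 1) :
    Disjoint (dropSet Φ u n δ t) (Prod.swap ⁻¹' dropSet Φ u n δ t) := by
  refine disjoint_left.2 fun p ⟨_, h₁, _⟩ ⟨_, h₂, _⟩ => ?_
  simp only [Prod.fst_swap, Prod.snd_swap] at h₂
  nlinarith [abs_nonneg (u p.1), abs_nonneg (u p.2)]

lemma diff_subset_preimage_dropSet (x : X) :
    {y | Φ t * dist x y ^ n ≤ Φ ((1 - δ) * |u x|)} \ ({x} ∪ {y | δ * |u x| ≤ |u y|}) ⊆
      Prod.mk x ⁻¹' dropSet Φ u n δ t := by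
  rintro y ⟨hdist, hy⟩
  simp only [mem_union, mem_singleton_iff, mem_ofPred_eq, not_or, not_le] at hy
  exact ⟨Ne.symm hy.1, hy.2, hdist⟩

variable [MeasurableSpace X] [BorelSpace X] [SecondCountableTopology X]

lemma measurableSet_dropSet (hΦ : ContinuousOn Φ (Ici 0)) (hu : Measurable u) (hδ : δ ≤ 1) :
    MeasurableSet (dropSet Φ u n δ t) := by
  have hΦu : Measurable fun p : X × X => Φ ((1 - δ) * |u p.1|) :=
    hΦ.measurable_comp_mul_abs (sub_nonneg.2 hδ) (hu.comp measurable_fst)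
  simp only [dropSet, ofPred_and]
  refine (isClosed_eq continuous_fst continuous_snd).measurableSet.compl.inter
    ((measurableSet_lt ?_ ?_).inter (measurableSet_le ?_ hΦu)) <;> fun_prop

lemma two_mul_measure_dropSet_le (μ : Measure X) [SFinite μ] (hΦ : ContinuousOn Φ (Ici 0))
    (hmono : MonotoneOn Φ (Ici 0)) (hu : Measurable u) (hδ : δ ≤ 1) :
    2 * μ.prod μ (dropSet Φ u n δ t) ≤ μ.prod μ (jumpSet Φ u n t) := by
  have hG : MeasurableSet (dropSet Φ u n δ t) := measurableSet_dropSet hΦ hu hδ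
  calc 2 * μ.prod μ (dropSet Φ u n δ t)
      = μ.prod μ (dropSet Φ u n δ t ∪ Prod.swap ⁻¹' dropSet Φ u n δ t) := by
        rw [measure_union (disjoint_dropSet_swap hδ) (hG.preimage measurable_swap),
          Measure.measurePreserving_swap.measure_preimage hG.nullMeasurableSet, two_mul]
    _ ≤ μ.prod μ (jumpSet Φ u n t) := by
        refine measure_mono (union_subset (dropSet_subset_jumpSet hmono hδ) ?_)
        rw [← swap_preimage_jumpSet (Φ := Φ)]
        exact preimage_mono (dropSet_subset_jumpSet hmono hδ)

end PairSets

section AddHaar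

variable {E : Type*} [NormedAddCommGroup E] [NormedSpace ℝ E] [MeasurableSpace E] [BorelSpace E]
  [FiniteDimensional ℝ E] [Nontrivial E] (μ : Measure E) [μ.IsAddHaarMeasure]

lemma ofReal_mul_measure_ball_le (x : E) {c q : ℝ} (hc : 0 < c) (hq : 0 ≤ q) :
    ENNReal.ofReal q * μ (ball 0 1) ≤
      ENNReal.ofReal c * μ {y | c * dist x y ^ finrank ℝ E ≤ q} := by
  set n := finrank ℝ E
  set r := (q / c) ^ (n⁻¹ : ℝ)
  have hrn : r ^ n = q / c := Real.rpow_inv_natCast_pow (div_nonneg hq hc.le) finrank_pos.ne'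
  have hball : ball x r ⊆ {y | c * dist x y ^ n ≤ q} := fun y hy =>
    (le_div_iff₀' hc).1 (hrn ▸ pow_le_pow_left₀ dist_nonneg (mem_ball'.1 hy).le n)
  calc ENNReal.ofReal q * μ (ball 0 1) = ENNReal.ofReal c * μ (ball x r) := by
        rw [μ.addHaar_ball x (by positivity), hrn, ← mul_assoc, ← ENNReal.ofReal_mul hc.le,
          mul_div_cancel₀ q hc.ne']
    _ ≤ _ := by gcongr

lemma le_liminf_ofReal_mul_measure_diff {ι : Type*} {l : Filter ι} [l.NeBot] {c : ι → ℝ}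
    (hc : Tendsto c l (𝓝[>] 0)) (x : E) {q : ℝ} (hq : 0 ≤ q) {B : Set E} (hB : μ B ≠ ∞) :
    ENNReal.ofReal q * μ (ball 0 1) ≤
      liminf (fun i => ENNReal.ofReal (c i) *
        μ ({y | c i * dist x y ^ finrank ℝ E ≤ q} \ B)) l := by
  have hcB : Tendsto (fun i => ENNReal.ofReal (c i) * μ B) l (𝓝 0) := by
    simpa using ENNReal.Tendsto.mul_const
      (ENNReal.tendsto_ofReal (tendsto_nhds_of_tendsto_nhdsWithin hc)) (Or.inr hB)
  have hlim : Tendsto (fun i => ENNReal.ofReal q * μ (ball 0 1) - ENNReal.ofReal (c i) * μ B) l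
      (𝓝 (ENNReal.ofReal q * μ (ball 0 1))) := by
    simpa using ENNReal.Tendsto.sub tendsto_const_nhds hcB
      (Or.inl (ENNReal.mul_ne_top ENNReal.ofReal_ne_top measure_ball_lt_top.ne))
  refine hlim.liminf_eq.symm.le.trans (liminf_le_liminf ?_)
  filter_upwards [hc.eventually eventually_mem_nhdsWithin] with i (hci : 0 < c i)
  calc ENNReal.ofReal q * μ (ball 0 1) - ENNReal.ofReal (c i) * μ B
      ≤ ENNReal.ofReal (c i) * μ {y | c i * dist x y ^ finrank ℝ E ≤ q} -
          ENNReal.ofReal (c i) * μ B :=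
        tsub_le_tsub_right (ofReal_mul_measure_ball_le μ x hci hq) _
    _ = ENNReal.ofReal (c i) * (μ {y | c i * dist x y ^ finrank ℝ E ≤ q} - μ B) :=
        (ENNReal.mul_sub fun _ _ => ENNReal.ofReal_ne_top).symm
    _ ≤ _ := by gcongr; exact le_measure_sdiff

variable {Φ : ℝ → ℝ} {u : E → ℝ} {δ : ℝ}

lemma le_liminf_ofReal_mul_measure_preimage_dropSet (hΦ : ContinuousOn Φ (Ici 0))
    (h0 : Φ 0 = 0) (hmono : MonotoneOn Φ (Ici 0)) (hpos : ∀ s > 0, 0 < Φ s) (hu : Measurable u)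
    (hfin : ∫⁻ x, ENNReal.ofReal (Φ |u x|) ∂μ ≠ ∞) (hδ : δ ∈ Ioo 0 1) (x : E) :
    ENNReal.ofReal (Φ ((1 - δ) * |u x|)) * μ (ball 0 1) ≤
      liminf (fun t => ENNReal.ofReal (Φ t) *
        μ (Prod.mk x ⁻¹' dropSet Φ u (finrank ℝ E) δ t)) (𝓝[>] 0) := by
  rcases (abs_nonneg (u x)).eq_or_lt with hux | hux
  · simp [← hux, h0]
  have hB : μ ({x} ∪ {y | δ * |u x| ≤ |u y|}) ≠ ∞ :=
    measure_union_ne_top (by simp) (measure_le_abs_ne_top μ hΦ hmono hu hfin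
      (mul_pos hδ.1 hux).le (hpos _ (mul_pos hδ.1 hux)))
  have hq : 0 ≤ (1 - δ) * |u x| := mul_nonneg (sub_nonneg.2 hδ.2.le) hux.le
  refine (le_liminf_ofReal_mul_measure_diff μ (tendsto_nhdsGT_zero_of_pos hΦ h0 hpos) x
    (h0 ▸ hmono self_mem_Ici hq hq) hB).trans
    (liminf_le_liminf (Eventually.of_forall fun t => ?_))
  gcongr
  exact diff_subset_preimage_dropSet x

lemma two_mul_measure_ball_mul_lintegral_le_liminf_of_mem_Ioo (hΦ : ContinuousOn Φ (Ici 0))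
    (h0 : Φ 0 = 0) (hmono : MonotoneOn Φ (Ici 0)) (hpos : ∀ s > 0, 0 < Φ s) (hu : Measurable u)
    (hfin : ∫⁻ x, ENNReal.ofReal (Φ |u x|) ∂μ ≠ ∞) (hδ : δ ∈ Ioo 0 1) :
    2 * μ (ball 0 1) * ∫⁻ x, ENNReal.ofReal (Φ ((1 - δ) * |u x|)) ∂μ ≤
      liminf (fun t => ENNReal.ofReal (Φ t) * μ.prod μ (jumpSet Φ u (finrank ℝ E) t)) (𝓝[>] 0) := by
  set n := finrank ℝ E
  have hG (t : ℝ) : MeasurableSet (dropSet Φ u n δ t) := measurableSet_dropSet hΦ hu hδ.2.le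
  calc 2 * μ (ball 0 1) * ∫⁻ x, ENNReal.ofReal (Φ ((1 - δ) * |u x|)) ∂μ
      = 2 * ∫⁻ x, ENNReal.ofReal (Φ ((1 - δ) * |u x|)) * μ (ball 0 1) ∂μ := by
        rw [lintegral_mul_const' _ _ measure_ball_lt_top.ne, mul_assoc, mul_comm (μ _)]
    _ ≤ 2 * ∫⁻ x, liminf (fun t => ENNReal.ofReal (Φ t) *
          μ (Prod.mk x ⁻¹' dropSet Φ u n δ t)) (𝓝[>] 0) ∂μ := by
        gcongr with x
        exact le_liminf_ofReal_mul_measure_preimage_dropSet μ hΦ h0 hmono hpos hu hfin hδ x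
    _ ≤ 2 * liminf (fun t => ∫⁻ x, ENNReal.ofReal (Φ t) *
          μ (Prod.mk x ⁻¹' dropSet Φ u n δ t) ∂μ) (𝓝[>] 0) := by
        gcongr
        exact lintegral_liminf_le fun t => (measurable_measure_prodMk_left (hG t)).const_mul _
    _ = liminf (fun t => ENNReal.ofReal (Φ t) * (2 * μ.prod μ (dropSet Φ u n δ t))) (𝓝[>] 0) := by
        rw [← ENNReal.liminf_const_mul_of_ne_top ENNReal.ofNat_ne_top]
        congr with t
        rw [lintegral_const_mul _ (measurable_measure_prodMk_left (hG t)),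
          ← Measure.prod_apply (hG t)]
        ring
    _ ≤ _ := liminf_le_liminf (Eventually.of_forall fun t => by
        gcongr; exact two_mul_measure_dropSet_le μ hΦ hmono hu hδ.2.le)

theorem two_mul_measure_ball_mul_lintegral_le_liminf (hΦ : ContinuousOn Φ (Ici 0))
    (h0 : Φ 0 = 0) (hmono : MonotoneOn Φ (Ici 0)) (hpos : ∀ s > 0, 0 < Φ s) (hu : Measurable u)
    (hfin : ∫⁻ x, ENNReal.ofReal (Φ |u x|) ∂μ ≠ ∞) :
    2 * μ (ball 0 1) * ∫⁻ x, ENNReal.ofReal (Φ |u x|) ∂μ ≤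
      liminf (fun t => ENNReal.ofReal (Φ t) * μ.prod μ (jumpSet Φ u (finrank ℝ E) t)) (𝓝[>] 0) := by
  obtain ⟨δ, -, hδ, hδ0⟩ := exists_seq_strictAnti_tendsto' (zero_lt_one' ℝ)
  set f : ℕ → E → ℝ≥0∞ := fun j x => ENNReal.ofReal (Φ ((1 - δ j) * |u x|))
  have hf (j : ℕ) : Measurable (f j) :=
    (hΦ.measurable_comp_mul_abs (sub_nonneg.2 (hδ j).2.le) hu).ennreal_ofReal
  have hlim (x : E) : Tendsto (f · x) atTop (𝓝 (ENNReal.ofReal (Φ |u x|))) := by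
    refine ENNReal.tendsto_ofReal ((hΦ |u x| (abs_nonneg (u x))).tendsto.comp ?_)
    refine tendsto_nhdsWithin_iff.2 ⟨?_, Eventually.of_forall fun j =>
      mul_nonneg (sub_nonneg.2 (hδ j).2.le) (abs_nonneg (u x))⟩
    simpa using ((tendsto_const_nhds (x := (1 : ℝ))).sub hδ0).mul_const |u x|
  calc 2 * μ (ball 0 1) * ∫⁻ x, ENNReal.ofReal (Φ |u x|) ∂μ
      = 2 * μ (ball 0 1) * ∫⁻ x, liminf (f · x) atTop ∂μ := by
        simp_rw [fun x => (hlim x).liminf_eq]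
    _ ≤ 2 * μ (ball 0 1) * liminf (fun j => ∫⁻ x, f j x ∂μ) atTop := by
        gcongr
        exact lintegral_liminf_le hf
    _ = liminf (fun j => 2 * μ (ball 0 1) * ∫⁻ x, f j x ∂μ) atTop :=
        (ENNReal.liminf_const_mul_of_ne_top (by finiteness)).symm
    _ ≤ _ := liminf_le_of_frequently_le' (Frequently.of_forall fun j =>
        two_mul_measure_ball_mul_lintegral_le_liminf_of_mem_Ioo μ hΦ h0 hmono hpos hu hfin (hδ j))

end AddHaar

theorem stmt10 (N : ℕ) (hN : 0 < N) (Φ : ℝ → ℝ)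
    (hΦc : ContinuousOn Φ (Ici 0)) (hΦconv : ConvexOn ℝ (Ici 0) Φ)
    (hΦ0 : Φ 0 = 0) (hΦnn : ∀ s, 0 ≤ s → 0 ≤ Φ s)
    (hΔ2 : ∃ k > 0, ∀ s > (0:ℝ), Φ (2 * s) ≤ k * Φ s)
    (u : EuclideanSpace ℝ (Fin N) → ℝ) (hu : Measurable u)
    (hfin : ∫⁻ x, ENNReal.ofReal (Φ (|u x|)) < ⊤) :
    2 * volume (ball (0 : EuclideanSpace ℝ (Fin N)) 1) *
        (∫⁻ x, ENNReal.ofReal (Φ (|u x|))) ≤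
      Filter.liminf (fun t : ℝ => ENNReal.ofReal (Φ t) *
        volume {p : EuclideanSpace ℝ (Fin N) × EuclideanSpace ℝ (Fin N) |
          p.1 ≠ p.2 ∧ Φ t * dist p.1 p.2 ^ N ≤ Φ (|u p.1 - u p.2|)})
        (nhdsWithin 0 (Ioi 0)) := by
  have hmono := monotoneOn_of_convexOn_of_map_zero hΦconv hΦ0 hΦnn
  by_cases hpos : ∀ s > 0, 0 < Φ s
  · have : Nonempty (Fin N) := ⟨⟨0, hN⟩⟩
    have h := two_mul_measure_ball_mul_lintegral_le_liminf volume hΦc hΦ0 hmono hpos hu hfin.ne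
    rwa [finrank_euclideanSpace_fin, ← Measure.volume_eq_prod] at h
  push Not at hpos
  obtain ⟨s, hs, hΦs⟩ := hpos
  obtain ⟨k, -, hΔ⟩ := hΔ2
  have hzero (x : EuclideanSpace ℝ (Fin N)) : Φ |u x| = 0 :=
    eq_zero_of_doubling hΔ hmono hΦnn hs (le_antisymm hΦs (hΦnn s hs.le)) (abs_nonneg _)
  simp [hzero]
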